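/- The monodromy element of 𝒩 satisfies ℳ = 1⊗1 + Kθ̄⊗θ + θK⊗θ̄ − ρ⊗ρ, and moreover ℳ = Δ(v⁻¹)·(v⊗v), where v := 1+ρ (central and invertible with v⁻¹ = 1−ρ). -/

import Mathlib

/-!
Everything is a finite computation in `𝒩`. The relations `K² = 1`, `θ² = θ̄² = 0` and the
pairwise anticommutation of the generators bring every product into the basis `Kᵃ θᵇ θ̄ᶜ`,
which yields the normal form of `ℳ`. For the factorisation, `Δ(ρ) = Δ(θ̄)Δ(θ)` equals
`ρ⊗1 + θ̄K⊗θ + Kθ⊗θ̄ + 1⊗ρ`; multiplying `1 − Δ(ρ)` by `(1+ρ)⊗(1+ρ)` and using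
`θρ = θ̄ρ = ρ² = 0` gives the same normal form. Finally `ρ` commutes with the three
generators, hence is central, and `ρ² = 0` makes `1 − ρ` the inverse of `1 + ρ`.
-/

noncomputable section

open TensorProduct

/-- The quadratic form `q(x₀,x₁,x₂) = x₀²` on `ℝ³`. -/
def Nform : QuadraticForm ℝ (Fin 3 → ℝ) :=
  QuadraticMap.weightedSumSquares ℝ (fun i : Fin 3 => if i = 0 then (1 : ℝ) else 0)

/-- The algebra `𝒩 = ℤ/2 ⋉ Λ*ℝ²`, realized as the Clifford algebra of `Nform`. -/
abbrev NA := CliffordAlgebra Nform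

/-- The generator `K`. -/
def K : NA := CliffordAlgebra.ι Nform (Pi.single 0 1)

/-- The generator `θ`. -/
def θ : NA := CliffordAlgebra.ι Nform (Pi.single 1 1)

/-- The generator `θ̄`. -/
def θb : NA := CliffordAlgebra.ι Nform (Pi.single 2 1)

/-- `ρ := θ̄θ`. -/
def ρ : NA := θb * θ

/-- `Z := (1/2)·Σ_{i,j∈{0,1}} (−1)^{ij} K^i ⊗ K^j`. -/
def Z : NA ⊗[ℝ] NA :=
  (1 / 2 : ℝ) • ∑ i : Fin 2, ∑ j : Fin 2,
    ((-1 : ℝ)) ^ ((i : ℕ) * (j : ℕ)) • ((K ^ (i : ℕ)) ⊗ₜ[ℝ] (K ^ (j : ℕ)))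

/-- The R-matrix `R := (1⊗1 + θ⊗Kθ̄)·Z`. -/
def Rmat : NA ⊗[ℝ] NA := ((1 : NA ⊗[ℝ] NA) + θ ⊗ₜ[ℝ] (K * θb)) * Z

/-- The monodromy element `ℳ := R₂₁·R`. -/
def Mono : NA ⊗[ℝ] NA := (Algebra.TensorProduct.comm ℝ NA NA) Rmat * Rmat

open CliffordAlgebra

lemma Nform_apply (x : Fin 3 → ℝ) : Nform x = x 0 ^ 2 := by
  simp [Nform, QuadraticMap.weightedSumSquares_apply, sq]

lemma Nform_isOrtho {a b : Fin 3 → ℝ} (h : a 0 * b 0 = 0) : Nform.IsOrtho a b := by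
  rw [QuadraticMap.isOrtho_def, Nform_apply, Nform_apply, Nform_apply, Pi.add_apply]
  linear_combination 2 * h

lemma ι_eq_smul_K_add (m : Fin 3 → ℝ) : ι Nform m = m 0 • K + m 1 • θ + m 2 • θb := by
  have hm : m = m 0 • Pi.single 0 1 + m 1 • Pi.single 1 1 + m 2 • Pi.single 2 1 := by
    funext i
    fin_cases i <;> simp
  rw [hm]
  simp [K, θ, θb]

@[simp] lemma K_mul_K : K * K = 1 := by
  rw [K, ι_sq_scalar, Nform_apply]; simp

@[simp] lemma θ_mul_θ : θ * θ = 0 := by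
  rw [θ, ι_sq_scalar, Nform_apply]; simp

@[simp] lemma θb_mul_θb : θb * θb = 0 := by
  rw [θb, ι_sq_scalar, Nform_apply]; simp

@[simp] lemma θ_mul_K : θ * K = -(K * θ) := ι_mul_ι_comm_of_isOrtho (Nform_isOrtho (by simp))

@[simp] lemma θb_mul_K : θb * K = -(K * θb) := ι_mul_ι_comm_of_isOrtho (Nform_isOrtho (by simp))

@[simp] lemma θb_mul_θ : θb * θ = -(θ * θb) := ι_mul_ι_comm_of_isOrtho (Nform_isOrtho (by simp))

@[simp] lemma K_mul_K_mul (x : NA) : K * (K * x) = x := by rw [← mul_assoc, K_mul_K, one_mul]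

@[simp] lemma θ_mul_θ_mul (x : NA) : θ * (θ * x) = 0 := by rw [← mul_assoc, θ_mul_θ, zero_mul]

@[simp] lemma θb_mul_θb_mul (x : NA) : θb * (θb * x) = 0 := by
  rw [← mul_assoc, θb_mul_θb, zero_mul]

@[simp] lemma θ_mul_K_mul (x : NA) : θ * (K * x) = -(K * (θ * x)) := by
  rw [← mul_assoc, θ_mul_K, neg_mul, mul_assoc]

@[simp] lemma θb_mul_K_mul (x : NA) : θb * (K * x) = -(K * (θb * x)) := by
  rw [← mul_assoc, θb_mul_K, neg_mul, mul_assoc]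

@[simp] lemma θb_mul_θ_mul (x : NA) : θb * (θ * x) = -(θ * (θb * x)) := by
  rw [← mul_assoc, θb_mul_θ, neg_mul, mul_assoc]

lemma ρ_eq : ρ = -(θ * θb) := θb_mul_θ

lemma ρ_mul_ρ : ρ * ρ = 0 := by simp [ρ_eq, mul_assoc]

lemma commute_ρ_ι (m : Fin 3 → ℝ) : Commute ρ (ι Nform m) := by
  rw [ι_eq_smul_K_add]
  refine .add_right (.add_right (.smul_right ?_ _) (.smul_right ?_ _)) (.smul_right ?_ _) <;>
    simp [Commute, SemiconjBy, ρ_eq, mul_assoc]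

lemma commute_ρ (x : NA) : Commute ρ x := by
  induction x using CliffordAlgebra.induction with
  | algebraMap r => exact Algebra.commute_algebraMap_right r ρ
  | ι m => exact commute_ρ_ι m
  | mul a b ha hb => exact ha.mul_right hb
  | add a b ha hb => exact ha.add_right hb

lemma Z_eq : Z = (1 / 2 : ℝ) • (1 ⊗ₜ[ℝ] 1 + 1 ⊗ₜ[ℝ] K + K ⊗ₜ[ℝ] 1 - K ⊗ₜ[ℝ] K) := by
  simp only [Z, Fin.sum_univ_two]
  norm_num
  module

lemma Mono_eq : Mono = 1 + (K * θb) ⊗ₜ[ℝ] θ + (θ * K) ⊗ₜ[ℝ] θb - ρ ⊗ₜ[ℝ] ρ := by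
  simp only [Mono, Rmat, Z_eq, map_add, map_sub, map_neg, map_smul,
    Algebra.TensorProduct.comm_tmul, Algebra.TensorProduct.one_def, ρ_eq,
    mul_add, add_mul, mul_sub, sub_mul, smul_mul_assoc, mul_smul_comm,
    Algebra.TensorProduct.tmul_mul_tmul, one_mul, mul_one, mul_assoc, neg_mul, mul_neg, neg_neg,
    K_mul_K, θ_mul_K, θb_mul_K, θb_mul_θ, K_mul_K_mul, θ_mul_K_mul, θb_mul_K_mul, tmul_neg, neg_tmul]
  module

lemma map_ρ (Δ : NA →ₐ[ℝ] NA ⊗[ℝ] NA)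
    (hΔθ : Δ θ = θ ⊗ₜ[ℝ] 1 + K ⊗ₜ[ℝ] θ) (hΔθb : Δ θb = θb ⊗ₜ[ℝ] 1 + K ⊗ₜ[ℝ] θb) :
    Δ ρ = ρ ⊗ₜ[ℝ] 1 + (θb * K) ⊗ₜ[ℝ] θ + (K * θ) ⊗ₜ[ℝ] θb + 1 ⊗ₜ[ℝ] ρ := by
  rw [ρ, map_mul, hΔθ, hΔθb]
  simp only [mul_add, add_mul, Algebra.TensorProduct.tmul_mul_tmul, one_mul, mul_one, K_mul_K]
  abel

lemma Mono_eq_map_one_sub_ρ_mul (Δ : NA →ₐ[ℝ] NA ⊗[ℝ] NA)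
    (hΔθ : Δ θ = θ ⊗ₜ[ℝ] 1 + K ⊗ₜ[ℝ] θ) (hΔθb : Δ θb = θb ⊗ₜ[ℝ] 1 + K ⊗ₜ[ℝ] θb) :
    Mono = Δ (1 - ρ) * ((1 + ρ) ⊗ₜ[ℝ] (1 + ρ)) := by
  rw [Mono_eq, map_sub, map_one, map_ρ Δ hΔθ hΔθb]
  simp only [Algebra.TensorProduct.one_def, ρ_eq, mul_add, add_mul, sub_mul,
    Algebra.TensorProduct.tmul_mul_tmul, one_mul, mul_one, mul_assoc, neg_mul, mul_neg, neg_neg,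
    θb_mul_θb, θ_mul_K, θb_mul_K, θ_mul_θ_mul, θb_mul_θ_mul, mul_zero,
    tmul_zero, zero_tmul, tmul_neg, neg_tmul, tmul_add, add_tmul]
  abel

theorem stmt7_general
    (Δ : NA →ₐ[ℝ] NA ⊗[ℝ] NA)
    (hΔθ : Δ θ = θ ⊗ₜ[ℝ] 1 + K ⊗ₜ[ℝ] θ)
    (hΔθb : Δ θb = θb ⊗ₜ[ℝ] 1 + K ⊗ₜ[ℝ] θb) :
    Mono = 1 + (K * θb) ⊗ₜ[ℝ] θ + (θ * K) ⊗ₜ[ℝ] θb - ρ ⊗ₜ[ℝ] ρ ∧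
    Mono = Δ (1 - ρ) * ((1 + ρ) ⊗ₜ[ℝ] (1 + ρ)) ∧
    (∀ x : NA, (1 + ρ) * x = x * (1 + ρ)) ∧
    (1 + ρ) * (1 - ρ) = 1 ∧ (1 - ρ) * (1 + ρ) = 1 := by
  have hρ : Commute (1 : NA) ρ := Commute.one_left ρ
  refine ⟨Mono_eq, Mono_eq_map_one_sub_ρ_mul Δ hΔθ hΔθb,
    fun x => ((Commute.one_left x).add_left (commute_ρ x)).eq, ?_, ?_⟩
  · rw [← hρ.mul_self_sub_mul_self_eq, ρ_mul_ρ, mul_one, sub_zero]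
  · rw [← hρ.mul_self_sub_mul_self_eq', ρ_mul_ρ, mul_one, sub_zero]

/-- the monodromy element of `𝒩` satisfies
`ℳ = 1⊗1 + Kθ̄⊗θ + θK⊗θ̄ − ρ⊗ρ` and `ℳ = Δ(v⁻¹)·(v⊗v)` where `v = 1+ρ` (central,
invertible with `v⁻¹ = 1−ρ`). -/
theorem stmt7
    (Δ : NA →ₐ[ℝ] NA ⊗[ℝ] NA)
    (hΔK : Δ K = K ⊗ₜ[ℝ] K)
    (hΔθ : Δ θ = θ ⊗ₜ[ℝ] 1 + K ⊗ₜ[ℝ] θ)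
    (hΔθb : Δ θb = θb ⊗ₜ[ℝ] 1 + K ⊗ₜ[ℝ] θb) :
    Mono = 1 + (K * θb) ⊗ₜ[ℝ] θ + (θ * K) ⊗ₜ[ℝ] θb - ρ ⊗ₜ[ℝ] ρ ∧
    Mono = Δ (1 - ρ) * ((1 + ρ) ⊗ₜ[ℝ] (1 + ρ)) ∧
    (∀ x : NA, (1 + ρ) * x = x * (1 + ρ)) ∧
    (1 + ρ) * (1 - ρ) = 1 ∧ (1 - ρ) * (1 + ρ) = 1 :=
  stmt7_general Δ hΔθ hΔθb
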